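/- arXiv:2009.11556 — 2 statements merged into one kernel-verified Lean document; each statement's English description precedes it below -/
import Mathlib

section
/- If A and B are n × n Hermitian positive semidefinite complex matrices, then for each i ∈ {1,…,n}, λ_i(A)·λ_n(B) ≤ λ_i(AB) ≤ λ_i(A)·λ_1(B), where λ_1 ≥ … ≥ λ_n denote eigenvalues in decreasing order (the eigenvalues of AB are real and nonnegative). -/
/-!
Write `A = Q * Q` with `Q` Hermitian. Then `A * B = Q * (Q * B)` has the characteristic polynomial
of the positive semidefinite matrix `C = Q * B * Q`, whose quadratic form `⟪Qx, B (Qx)⟫` lies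
between `λ_n(B) ‖Qx‖²` and `λ_1(B) ‖Qx‖²`, i.e. between `λ_n(B) ⟪x, A x⟫` and `λ_1(B) ⟪x, A x⟫`.
By the Courant–Fischer min-max principle an inequality `⟪x, C x⟫ ≤ c ⟪x, A x⟫` with `c ≥ 0`
passes to the ordered eigenvalues, `λ_i(C) ≤ c λ_i(A)`, and likewise for the reverse inequality.
-/

open ComplexOrder

/-- The eigenvalues of a Hermitian matrix listed in decreasing order:
`ordEig hA 0 = λ_1 ≥ ordEig hA 1 = λ_2 ≥ …`. -/
noncomputable def ordEig {n : ℕ} {A : Matrix (Fin n) (Fin n) ℂ} (hA : A.IsHermitian) :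
    Fin n → ℝ :=
  fun i => hA.eigenvalues (Tuple.sort hA.eigenvalues i.rev)

open Matrix Module Submodule RCLike
open scoped InnerProductSpace

theorem Submodule.exists_ne_zero_mem_inf_of_finrank_lt {K V : Type*} [DivisionRing K]
    [AddCommGroup V] [Module K V] [FiniteDimensional K V] (S T : Submodule K V)
    (h : finrank K V < finrank K S + finrank K T) : ∃ x ≠ (0 : V), x ∈ S ∧ x ∈ T := by
  have hsup : finrank K ↥(S ⊔ T) ≤ finrank K V := Submodule.finrank_le _
  have hinf : S ⊓ T ≠ ⊥ := by
    intro hbot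
    have := Submodule.finrank_sup_add_finrank_inf_eq S T
    rw [hbot, finrank_bot] at this
    omega
  obtain ⟨x, hx, hx0⟩ := Submodule.exists_mem_ne_zero_of_ne_bot hinf
  exact ⟨x, hx0, hx.1, hx.2⟩

namespace OrthonormalBasis

variable {ι 𝕜 E : Type*} [Fintype ι] [RCLike 𝕜] [NormedAddCommGroup E] [InnerProductSpace 𝕜 E]

theorem inner_eq_zero_of_mem_span_image (b : OrthonormalBasis ι 𝕜 E) {s : Set ι} {x : E}
    (hx : x ∈ span 𝕜 (b '' s)) {j : ι} (hj : j ∉ s) : ⟪b j, x⟫_𝕜 = 0 := by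
  rw [← b.coe_toBasis, Module.Basis.mem_span_image] at hx
  rw [← b.repr_apply_apply, ← b.coe_toBasis_repr_apply]
  by_contra h
  exact hj (hx (Finsupp.mem_support_iff.mpr h))

theorem finrank_span_image (b : OrthonormalBasis ι 𝕜 E) (s : Finset ι) :
    finrank 𝕜 (span 𝕜 (b '' s)) = s.card := by
  have hli : LinearIndependent 𝕜 (fun k : (s : Set ι) => b k) :=
    b.orthonormal.linearIndependent.comp Subtype.val Subtype.val_injective
  rw [Set.image_eq_range, finrank_span_eq_card hli]
  simp only [SetLike.coe_sort_coe, Fintype.card_coe]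

section Eigenbasis

variable (b : OrthonormalBasis ι 𝕜 E) {μ : ι → ℝ} {T : E →ₗ[𝕜] E}

theorem re_inner_map_self_eq_sum (hT : ∀ i, T (b i) = (μ i : 𝕜) • b i) (x : E) :
    re ⟪x, T x⟫_𝕜 = ∑ i, μ i * ‖⟪b i, x⟫_𝕜‖ ^ 2 := by
  have hTx : T x = ∑ i, ((μ i : 𝕜) * ⟪b i, x⟫_𝕜) • b i := by
    conv_lhs => rw [← b.sum_repr' x]
    simp only [map_sum, map_smul, hT, smul_smul, mul_comm]
  rw [hTx, inner_sum, map_sum]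
  refine Finset.sum_congr rfl fun i _ => ?_
  rw [inner_smul_right, ← inner_conj_symm x (b i), mul_assoc, RCLike.mul_conj]
  norm_cast

theorem re_inner_map_self_le_of_mem_span (hT : ∀ i, T (b i) = (μ i : 𝕜) • b i) {s : Set ι}
    {c : ℝ} (hμ : ∀ i ∈ s, μ i ≤ c) {x : E} (hx : x ∈ span 𝕜 (b '' s)) :
    re ⟪x, T x⟫_𝕜 ≤ c * ‖x‖ ^ 2 := by
  rw [b.re_inner_map_self_eq_sum hT, ← b.sum_sq_norm_inner_right, Finset.mul_sum]
  refine Finset.sum_le_sum fun i _ => ?_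
  by_cases hi : i ∈ s
  · exact mul_le_mul_of_nonneg_right (hμ i hi) (sq_nonneg _)
  · simp [b.inner_eq_zero_of_mem_span_image hx hi]

theorem mul_le_re_inner_map_self_of_mem_span (hT : ∀ i, T (b i) = (μ i : 𝕜) • b i) {s : Set ι}
    {c : ℝ} (hμ : ∀ i ∈ s, c ≤ μ i) {x : E} (hx : x ∈ span 𝕜 (b '' s)) :
    c * ‖x‖ ^ 2 ≤ re ⟪x, T x⟫_𝕜 := by
  rw [b.re_inner_map_self_eq_sum hT, ← b.sum_sq_norm_inner_right, Finset.mul_sum]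
  refine Finset.sum_le_sum fun i _ => ?_
  by_cases hi : i ∈ s
  · exact mul_le_mul_of_nonneg_right (hμ i hi) (sq_nonneg _)
  · simp [b.inner_eq_zero_of_mem_span_image hx hi]

end Eigenbasis

end OrthonormalBasis

theorem Matrix.IsHermitian.toEuclideanLin_eigenvectorBasis {𝕜 ι : Type*} [RCLike 𝕜] [Fintype ι]
    [DecidableEq ι] {M : Matrix ι ι 𝕜} (hM : M.IsHermitian) (j : ι) :
    toEuclideanLin M (hM.eigenvectorBasis j) = (hM.eigenvalues j : 𝕜) • hM.eigenvectorBasis j := by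
  rw [toLpLin_apply, hM.mulVec_eigenvectorBasis, RCLike.real_smul_eq_coe_smul (K := 𝕜)]
  rfl

theorem Matrix.inner_toEuclideanLin_conjTranspose_mul_mul {𝕜 m n : Type*} [RCLike 𝕜] [Fintype m]
    [DecidableEq m] [Fintype n] [DecidableEq n] (M : Matrix m m 𝕜) (Q : Matrix m n 𝕜)
    (x : EuclideanSpace 𝕜 n) :
    ⟪x, toEuclideanLin (Qᴴ * M * Q) x⟫_𝕜 =
      ⟪toEuclideanLin Q x, toEuclideanLin M (toEuclideanLin Q x)⟫_𝕜 := by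
  rw [toLpLin_mul 2 2, toLpLin_mul 2 2, LinearMap.comp_apply, LinearMap.comp_apply,
    toEuclideanLin_conjTranspose_eq_adjoint, LinearMap.adjoint_inner_right]

theorem Matrix.sq_norm_toEuclideanLin {𝕜 m n : Type*} [RCLike 𝕜] [Fintype m] [DecidableEq m]
    [Fintype n] [DecidableEq n] (Q : Matrix m n 𝕜) (x : EuclideanSpace 𝕜 n) :
    ‖toEuclideanLin Q x‖ ^ 2 = re ⟪x, toEuclideanLin (Qᴴ * Q) x⟫_𝕜 := by
  rw [← Matrix.mul_one Qᴴ, inner_toEuclideanLin_conjTranspose_mul_mul, toLpLin_one,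
    LinearMap.id_apply, inner_self_eq_norm_sq]

theorem Matrix.PosSemidef.exists_isHermitian_mul_self_eq {𝕜 n : Type*} [RCLike 𝕜] [Fintype n]
    [DecidableEq n] {A : Matrix n n 𝕜} (hA : A.PosSemidef) :
    ∃ Q : Matrix n n 𝕜, Q.IsHermitian ∧ Q * Q = A := by
  open scoped MatrixOrder in
  exact ⟨CFC.sqrt A, (CFC.sqrt_nonneg A).posSemidef.isHermitian, CFC.sqrt_mul_sqrt_self A hA.nonneg⟩

section ordEig

variable {N : ℕ} {M : Matrix (Fin N) (Fin N) ℂ}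

noncomputable def ordEigPerm (hM : M.IsHermitian) : Equiv.Perm (Fin N) :=
  Fin.revPerm.trans (Tuple.sort hM.eigenvalues)

theorem ordEig_eq_eigenvalues_ordEigPerm (hM : M.IsHermitian) (i : Fin N) :
    ordEig hM i = hM.eigenvalues (ordEigPerm hM i) :=
  rfl

theorem ordEig_antitone (hM : M.IsHermitian) : Antitone (ordEig hM) := fun _ _ hij =>
  Tuple.monotone_sort hM.eigenvalues (Fin.rev_le_rev.mpr hij)

theorem roots_charpoly_eq_map_ordEig (hM : M.IsHermitian) :
    M.charpoly.roots = Multiset.map (fun i => (ordEig hM i : ℂ)) Finset.univ.val := by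
  rw [hM.roots_charpoly_eq_eigenvalues]
  conv_lhs => rw [← Multiset.map_univ_val_equiv (ordEigPerm hM), Multiset.map_map]
  rfl

theorem re_inner_le_ordEig_zero_mul (hM : M.IsHermitian) (hN : 0 < N)
    (x : EuclideanSpace ℂ (Fin N)) :
    re ⟪x, toEuclideanLin M x⟫_ℂ ≤ ordEig hM ⟨0, hN⟩ * ‖x‖ ^ 2 := by
  refine hM.eigenvectorBasis.re_inner_map_self_le_of_mem_span
    hM.toEuclideanLin_eigenvectorBasis (s := Set.univ) (fun j _ => ?_) ?_
  · obtain ⟨i, rfl⟩ := (ordEigPerm hM).surjective j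
    rw [← ordEig_eq_eigenvalues_ordEigPerm]
    exact ordEig_antitone hM (Fin.le_def.mpr (Nat.zero_le _))
  · simpa using hM.eigenvectorBasis.toBasis.mem_span x

theorem ordEig_last_mul_le_re_inner (hM : M.IsHermitian) (hN : 0 < N)
    (x : EuclideanSpace ℂ (Fin N)) :
    ordEig hM ⟨N - 1, Nat.sub_lt hN one_pos⟩ * ‖x‖ ^ 2 ≤ re ⟪x, toEuclideanLin M x⟫_ℂ := by
  refine hM.eigenvectorBasis.mul_le_re_inner_map_self_of_mem_span
    hM.toEuclideanLin_eigenvectorBasis (s := Set.univ) (fun j _ => ?_) ?_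
  · obtain ⟨i, rfl⟩ := (ordEigPerm hM).surjective j
    rw [← ordEig_eq_eigenvalues_ordEigPerm]
    exact ordEig_antitone hM (Fin.le_def.mpr (Nat.le_sub_one_of_lt i.isLt))
  · simpa using hM.eigenvectorBasis.toBasis.mem_span x

/- The two halves of the Courant–Fischer characterization of `ordEig hM i`: the span of the
eigenvectors for `ordEig hM i, …, ordEig hM (N-1)` has dimension `N - i`, so it meets every
subspace of dimension `i + 1`; the span of those for `ordEig hM 0, …, ordEig hM i` is one such
subspace. -/
theorem exists_mem_ne_zero_re_inner_le_ordEig_mul (hM : M.IsHermitian) (i : Fin N)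
    (S : Submodule ℂ (EuclideanSpace ℂ (Fin N))) (hS : finrank ℂ S = i + 1) :
    ∃ x ∈ S, x ≠ 0 ∧ re ⟪x, toEuclideanLin M x⟫_ℂ ≤ ordEig hM i * ‖x‖ ^ 2 := by
  set v := hM.eigenvectorBasis
  set s := (Finset.Ici i).image (ordEigPerm hM)
  have hT : finrank ℂ (span ℂ (v '' s)) = N - i := by
    rw [v.finrank_span_image, Finset.card_image_of_injective _ (ordEigPerm hM).injective,
      Fin.card_Ici]
  have hdim : finrank ℂ (EuclideanSpace ℂ (Fin N)) < finrank ℂ S + finrank ℂ (span ℂ (v '' s)) := by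
    rw [finrank_euclideanSpace_fin, hS, hT]
    omega
  obtain ⟨x, hx0, hxS, hxT⟩ := exists_ne_zero_mem_inf_of_finrank_lt S _ hdim
  refine ⟨x, hxS, hx0, v.re_inner_map_self_le_of_mem_span hM.toEuclideanLin_eigenvectorBasis
    (fun j hj => ?_) hxT⟩
  obtain ⟨k, hk, rfl⟩ := Finset.mem_image.mp hj
  rw [← ordEig_eq_eigenvalues_ordEigPerm]
  exact ordEig_antitone hM (Finset.mem_Ici.mp hk)

theorem exists_finrank_eq_forall_ordEig_mul_le_re_inner (hM : M.IsHermitian) (i : Fin N) :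
    ∃ S : Submodule ℂ (EuclideanSpace ℂ (Fin N)), finrank ℂ S = i + 1 ∧
      ∀ x ∈ S, ordEig hM i * ‖x‖ ^ 2 ≤ re ⟪x, toEuclideanLin M x⟫_ℂ := by
  set v := hM.eigenvectorBasis
  set s := (Finset.Iic i).image (ordEigPerm hM)
  refine ⟨span ℂ (v '' s), ?_, fun x hx => v.mul_le_re_inner_map_self_of_mem_span
    hM.toEuclideanLin_eigenvectorBasis (fun j hj => ?_) hx⟩
  · rw [v.finrank_span_image, Finset.card_image_of_injective _ (ordEigPerm hM).injective,
      Fin.card_Iic]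
  · obtain ⟨k, hk, rfl⟩ := Finset.mem_image.mp hj
    rw [← ordEig_eq_eigenvalues_ordEigPerm]
    exact ordEig_antitone hM (Finset.mem_Iic.mp hk)

theorem ordEig_le_mul_ordEig_of_forall_re_inner_le (hM : M.IsHermitian)
    {A : Matrix (Fin N) (Fin N) ℂ} (hA : A.IsHermitian) {c : ℝ} (hc : 0 ≤ c)
    (h : ∀ x, re ⟪x, toEuclideanLin M x⟫_ℂ ≤ c * re ⟪x, toEuclideanLin A x⟫_ℂ) (i : Fin N) :
    ordEig hM i ≤ c * ordEig hA i := by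
  obtain ⟨S, hSdim, hMS⟩ := exists_finrank_eq_forall_ordEig_mul_le_re_inner hM i
  obtain ⟨x, hxS, hx0, hAx⟩ := exists_mem_ne_zero_re_inner_le_ordEig_mul hA i S hSdim
  refine le_of_mul_le_mul_right ?_ (by positivity : 0 < ‖x‖ ^ 2)
  calc ordEig hM i * ‖x‖ ^ 2 ≤ re ⟪x, toEuclideanLin M x⟫_ℂ := hMS x hxS
    _ ≤ c * re ⟪x, toEuclideanLin A x⟫_ℂ := h x
    _ ≤ c * (ordEig hA i * ‖x‖ ^ 2) := mul_le_mul_of_nonneg_left hAx hc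
    _ = c * ordEig hA i * ‖x‖ ^ 2 := (mul_assoc ..).symm

theorem mul_ordEig_le_ordEig_of_forall_mul_re_inner_le (hM : M.IsHermitian)
    {A : Matrix (Fin N) (Fin N) ℂ} (hA : A.IsHermitian) {c : ℝ} (hc : 0 ≤ c)
    (h : ∀ x, c * re ⟪x, toEuclideanLin A x⟫_ℂ ≤ re ⟪x, toEuclideanLin M x⟫_ℂ) (i : Fin N) :
    c * ordEig hA i ≤ ordEig hM i := by
  obtain ⟨S, hSdim, hAS⟩ := exists_finrank_eq_forall_ordEig_mul_le_re_inner hA i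
  obtain ⟨x, hxS, hx0, hMx⟩ := exists_mem_ne_zero_re_inner_le_ordEig_mul hM i S hSdim
  refine le_of_mul_le_mul_right ?_ (by positivity : 0 < ‖x‖ ^ 2)
  calc c * ordEig hA i * ‖x‖ ^ 2 = c * (ordEig hA i * ‖x‖ ^ 2) := mul_assoc ..
    _ ≤ c * re ⟪x, toEuclideanLin A x⟫_ℂ := mul_le_mul_of_nonneg_left (hAS x hxS) hc
    _ ≤ re ⟪x, toEuclideanLin M x⟫_ℂ := h x
    _ ≤ ordEig hM i * ‖x‖ ^ 2 := hMx

end ordEig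

/-- If `A` and `B` are `n × n` Hermitian positive semidefinite complex matrices, then the
eigenvalues of `A * B` (the roots of its characteristic polynomial) are real and nonnegative,
and, listed in decreasing order `μ`, satisfy `λ_i(A) λ_n(B) ≤ μ_i = λ_i(AB) ≤ λ_i(A) λ_1(B)`. -/
theorem stmt_4 (n : ℕ) (hn : 0 < n) (A B : Matrix (Fin n) (Fin n) ℂ)
    (hA : A.PosSemidef) (hB : B.PosSemidef) :
    ∃ μ : Fin n → ℝ, Antitone μ ∧
      (A * B).charpoly.roots = Multiset.map (fun i => (μ i : ℂ)) Finset.univ.val ∧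
      ∀ i : Fin n, 0 ≤ μ i ∧
        ordEig hA.1 i * ordEig hB.1 ⟨n - 1, Nat.sub_lt hn one_pos⟩ ≤ μ i ∧
        μ i ≤ ordEig hA.1 i * ordEig hB.1 ⟨0, hn⟩ := by
  obtain ⟨Q, hQ, hQA⟩ := hA.exists_isHermitian_mul_self_eq
  have hC : (Q * B * Q).PosSemidef := by
    simpa only [hQ.eq] using hB.conjTranspose_mul_mul_same Q
  have hCB : ∀ x, ⟪x, toEuclideanLin (Q * B * Q) x⟫_ℂ =
      ⟪toEuclideanLin Q x, toEuclideanLin B (toEuclideanLin Q x)⟫_ℂ := by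
    simpa only [hQ.eq] using inner_toEuclideanLin_conjTranspose_mul_mul B Q
  have hCA : ∀ x, ‖toEuclideanLin Q x‖ ^ 2 = re ⟪x, toEuclideanLin A x⟫_ℂ := by
    intro x
    rw [sq_norm_toEuclideanLin, hQ.eq, hQA]
  refine ⟨ordEig hC.1, ordEig_antitone hC.1, ?_, fun i => ⟨hC.eigenvalues_nonneg _, ?_, ?_⟩⟩
  · rw [← hQA, mul_assoc, charpoly_mul_comm, ← roots_charpoly_eq_map_ordEig hC.1]
  · rw [mul_comm]
    refine mul_ordEig_le_ordEig_of_forall_mul_re_inner_le hC.1 hA.1 (hB.eigenvalues_nonneg _)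
      (fun x => ?_) i
    rw [← hCA, hCB]
    exact ordEig_last_mul_le_re_inner hB.1 hn _
  · rw [mul_comm]
    refine ordEig_le_mul_ordEig_of_forall_re_inner_le hC.1 hA.1 (hB.eigenvalues_nonneg _)
      (fun x => ?_) i
    rw [← hCA, hCB]
    exact re_inner_le_ordEig_zero_mul hB.1 hn _
end

section
/- Let X be an M×T and H an N×M complex matrix. For each i ≤ min(M,N,T), λ_i(X X^H H^H H) ≤ λ_i(X X^H) · ‖H‖_F², where eigenvalues are in decreasing order. -/
/-!
Let `S = (Hᴴ H)^{1/2}`. Then `X Xᴴ Hᴴ H` has the same characteristic polynomial as the positive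
semidefinite matrix `C = S (X Xᴴ) S`, so the eigenvalues of `C` serve as `μ`. For the inequality
(one half of Courant–Fischer), a dimension count gives a nonzero `x` in the span of the top `i + 1`
eigenvectors of `C` such that `S x` is orthogonal to the top `i` eigenvectors of `A = X Xᴴ`; then
`λᵢ(C) ‖x‖² ≤ ⟪C x, x⟫ = ⟪A S x, S x⟫ ≤ λᵢ(A) ‖S x‖² = λᵢ(A) ‖H x‖² ≤ λᵢ(A) ‖H‖_F² ‖x‖²`,
the last step by Cauchy–Schwarz on each row of `H`.
-/

open ComplexOrder Matrix

open Module Submodule RCLike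
open scoped InnerProductSpace

theorem Module.Basis.exists_ne_zero_mem_span_Iic_apply_mem_span_Ici {K V W : Type*} [Field K]
    [AddCommGroup V] [Module K V] [AddCommGroup W] [Module K W] {n : ℕ}
    (b : Basis (Fin n) K V) (b' : Basis (Fin n) K W) (S : V →ₗ[K] W) (i : Fin n) :
    ∃ x ≠ 0, x ∈ span K (b '' Set.Iic i) ∧ S x ∈ span K (b' '' Set.Ici i) := by
  have : FiniteDimensional K V := b.finiteDimensional_of_finite
  let V₀ := span K (b '' Set.Iic i)
  let ψ : V₀ →ₗ[K] (Finset.Iio i → K) := LinearMap.pi (fun k => b'.coord k) ∘ₗ S ∘ₗ V₀.subtype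
  have hrank : finrank K (Finset.Iio i → K) < finrank K V₀ := by
    have hV₀ : V₀ = span K (Set.range (b ∘ ((↑) : Finset.Iic i → Fin n))) := by
      rw [Set.range_comp, Subtype.range_coe, Finset.coe_Iic]
    rw [hV₀, finrank_span_eq_card (b.linearIndependent.comp _ Subtype.val_injective),
      Module.finrank_fintype_fun_eq_card, Fintype.card_coe, Fintype.card_coe, Fin.card_Iio,
      Fin.card_Iic]
    exact Nat.lt_succ_self _
  obtain ⟨⟨x, hxV⟩, hxψ, hx0⟩ :=
    Submodule.ne_bot_iff _ |>.mp (LinearMap.ker_ne_bot_of_finrank_lt (f := ψ) hrank)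
  refine ⟨x, by simpa using hx0, hxV, b'.mem_span_image.mpr fun j hj => ?_⟩
  by_contra hji
  have hcoord := congrFun (LinearMap.mem_ker.mp hxψ) ⟨j, by simpa using hji⟩
  simp only [ψ, LinearMap.coe_comp, coe_subtype, Function.comp_apply, LinearMap.pi_apply,
    coord_apply, Pi.zero_apply] at hcoord
  simp [hcoord] at hj

theorem OrthonormalBasis.repr_eq_zero_of_mem_span_image {ι 𝕜 E : Type*} [Fintype ι] [RCLike 𝕜]
    [NormedAddCommGroup E] [InnerProductSpace 𝕜 E] (b : OrthonormalBasis ι 𝕜 E) {s : Set ι}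
    {x : E} (hx : x ∈ span 𝕜 (b '' s)) {j : ι} (hj : j ∉ s) : b.repr x j = 0 := by
  simpa using fun h => hj (b.toBasis.mem_span_image.mp hx h)

namespace LinearMap.IsSymmetric

variable {𝕜 E : Type*} [RCLike 𝕜] [NormedAddCommGroup E] [InnerProductSpace 𝕜 E]
  [FiniteDimensional 𝕜 E] {T : E →ₗ[𝕜] E} {n : ℕ}

theorem re_inner_apply_self_eq_sum (hT : T.IsSymmetric) (hn : finrank 𝕜 E = n) (x : E) :
    re ⟪T x, x⟫_𝕜 =
      ∑ j, hT.eigenvalues hn j * ‖(hT.eigenvectorBasis hn).repr x j‖ ^ 2 := by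
  rw [← (hT.eigenvectorBasis hn).repr.inner_map_map, PiLp.inner_apply, map_sum]
  refine Finset.sum_congr rfl fun j _ => ?_
  rw [eigenvectorBasis_apply_self_apply, ← smul_eq_mul, inner_smul_real_left, smul_re,
    inner_self_eq_norm_sq]

theorem re_inner_apply_self_le_of_mem_span (hT : T.IsSymmetric) (hn : finrank 𝕜 E = n)
    {s : Set (Fin n)} {μ : ℝ} (hμ : ∀ j ∈ s, hT.eigenvalues hn j ≤ μ) {x : E}
    (hx : x ∈ span 𝕜 (hT.eigenvectorBasis hn '' s)) :
    re ⟪T x, x⟫_𝕜 ≤ μ * ‖x‖ ^ 2 := by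
  rw [re_inner_apply_self_eq_sum, ← (hT.eigenvectorBasis hn).sum_sq_norm_inner_right,
    Finset.mul_sum]
  refine Finset.sum_le_sum fun j _ => ?_
  rw [← (hT.eigenvectorBasis hn).repr_apply_apply]
  by_cases hj : j ∈ s
  · exact mul_le_mul_of_nonneg_right (hμ j hj) (sq_nonneg _)
  · simp [(hT.eigenvectorBasis hn).repr_eq_zero_of_mem_span_image hx hj]

theorem le_re_inner_apply_self_of_mem_span (hT : T.IsSymmetric) (hn : finrank 𝕜 E = n)
    {s : Set (Fin n)} {μ : ℝ} (hμ : ∀ j ∈ s, μ ≤ hT.eigenvalues hn j) {x : E}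
    (hx : x ∈ span 𝕜 (hT.eigenvectorBasis hn '' s)) :
    μ * ‖x‖ ^ 2 ≤ re ⟪T x, x⟫_𝕜 := by
  rw [re_inner_apply_self_eq_sum, ← (hT.eigenvectorBasis hn).sum_sq_norm_inner_right,
    Finset.mul_sum]
  refine Finset.sum_le_sum fun j _ => ?_
  rw [← (hT.eigenvectorBasis hn).repr_apply_apply]
  by_cases hj : j ∈ s
  · exact mul_le_mul_of_nonneg_right (hμ j hj) (sq_nonneg _)
  · simp [(hT.eigenvectorBasis hn).repr_eq_zero_of_mem_span_image hx hj]

theorem eigenvalues_le_mul_of_re_inner_eq {C S : E →ₗ[𝕜] E} (hC : C.IsSymmetric)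
    (hT : T.IsPositive) (hCT : ∀ x, re ⟪C x, x⟫_𝕜 = re ⟪T (S x), S x⟫_𝕜) {c : ℝ}
    (hS : ∀ x, ‖S x‖ ^ 2 ≤ c * ‖x‖ ^ 2) (hn : finrank 𝕜 E = n) (i : Fin n) :
    hC.eigenvalues hn i ≤ hT.isSymmetric.eigenvalues hn i * c := by
  obtain ⟨x, hx0, hxC, hxT⟩ :=
    (hC.eigenvectorBasis hn).toBasis.exists_ne_zero_mem_span_Iic_apply_mem_span_Ici
      (hT.isSymmetric.eigenvectorBasis hn).toBasis S i
  refine le_of_mul_le_mul_right ?_ (by positivity : 0 < ‖x‖ ^ 2)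
  calc hC.eigenvalues hn i * ‖x‖ ^ 2
      ≤ re ⟪C x, x⟫_𝕜 :=
        hC.le_re_inner_apply_self_of_mem_span hn (fun j hj => hC.eigenvalues_antitone hn hj) hxC
    _ = re ⟪T (S x), S x⟫_𝕜 := hCT x
    _ ≤ hT.isSymmetric.eigenvalues hn i * ‖S x‖ ^ 2 :=
        hT.isSymmetric.re_inner_apply_self_le_of_mem_span hn
          (fun j hj => hT.isSymmetric.eigenvalues_antitone hn hj) hxT
    _ ≤ hT.isSymmetric.eigenvalues hn i * (c * ‖x‖ ^ 2) :=
        mul_le_mul_of_nonneg_left (hS x) (hT.nonneg_eigenvalues hn i)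
    _ = hT.isSymmetric.eigenvalues hn i * c * ‖x‖ ^ 2 := by ring

end LinearMap.IsSymmetric

namespace Matrix

variable {𝕜 m n : Type*} [RCLike 𝕜] [Fintype m] [Fintype n] [DecidableEq n]

theorem norm_toEuclideanLin_apply_sq_le (B : Matrix m n 𝕜) (x : EuclideanSpace 𝕜 n) :
    ‖toEuclideanLin B x‖ ^ 2 ≤ (∑ k, ∑ l, ‖B k l‖ ^ 2) * ‖x‖ ^ 2 := by
  rw [EuclideanSpace.norm_sq_eq, EuclideanSpace.norm_sq_eq, Finset.sum_mul]
  refine Finset.sum_le_sum fun k _ => ?_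
  calc ‖(B *ᵥ x.ofLp) k‖ ^ 2 ≤ (∑ l, ‖B k l‖ * ‖x l‖) ^ 2 := by
        gcongr
        exact (norm_sum_le _ _).trans_eq (by simp_rw [norm_mul])
    _ ≤ (∑ l, ‖B k l‖ ^ 2) * ∑ l, ‖x l‖ ^ 2 := Finset.sum_mul_sq_le_sq_mul_sq _ _ _

theorem charpoly_toEuclideanLin (A : Matrix n n 𝕜) : (toEuclideanLin A).charpoly = A.charpoly := by
  rw [toEuclideanLin, toLpLin_eq_toLin, charpoly_toLin]

variable [DecidableEq m]

theorem inner_toEuclideanLin_conjTranspose_mul_mul_self (A : Matrix m m 𝕜) (B : Matrix m n 𝕜)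
    (x : EuclideanSpace 𝕜 n) :
    ⟪toEuclideanLin (Bᴴ * A * B) x, x⟫_𝕜 =
      ⟪toEuclideanLin A (toEuclideanLin B x), toEuclideanLin B x⟫_𝕜 := by
  rw [toLpLin_mul_same, toLpLin_mul_same, toEuclideanLin_conjTranspose_eq_adjoint]
  exact LinearMap.adjoint_inner_left (toEuclideanLin B) x _

theorem norm_toEuclideanLin_apply_sq (B : Matrix m n 𝕜) (x : EuclideanSpace 𝕜 n) :
    ‖toEuclideanLin B x‖ ^ 2 = re ⟪toEuclideanLin (Bᴴ * B) x, x⟫_𝕜 := by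
  rw [← Matrix.mul_one Bᴴ, inner_toEuclideanLin_conjTranspose_mul_mul_self, toLpLin_one,
    LinearMap.id_apply, inner_self_eq_norm_sq]

section
open scoped MatrixOrder

theorem PosSemidef.exists_isHermitian_mul_self_eq_s14 {B : Matrix n n 𝕜} (hB : B.PosSemidef) :
    ∃ S : Matrix n n 𝕜, S.IsHermitian ∧ S * S = B :=
  ⟨CFC.sqrt B, (CFC.sqrt_nonneg B).posSemidef.1, CFC.sqrt_mul_sqrt_self B hB.nonneg⟩

end

end Matrix

section ordEig

variable {n : ℕ} {A : Matrix (Fin n) (Fin n) ℂ} (hA : A.IsHermitian)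

theorem ordEig_antitone_s14 : Antitone (ordEig hA) :=
  fun _ _ hij => Tuple.monotone_sort hA.eigenvalues (Fin.rev_le_rev.mpr hij)

theorem roots_charpoly_eq_ordEig :
    A.charpoly.roots = Multiset.map (fun i => (ordEig hA i : ℂ)) Finset.univ.val := by
  rw [hA.roots_charpoly_eq_eigenvalues]
  conv_lhs => rw [← Multiset.map_univ_val_equiv (Fin.revPerm.trans (Tuple.sort hA.eigenvalues)),
    Multiset.map_map]
  rfl

theorem sort_roots_charpoly_eq_ordEig :
    (A.charpoly.roots.map re).sort (· ≥ ·) = List.ofFn (ordEig hA) := by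
  rw [roots_charpoly_eq_ordEig hA, Multiset.map_map]
  simp only [Function.comp_apply, re_to_complex, Complex.ofReal_re, Fin.univ_val_map,
    Multiset.coe_sort]
  apply List.mergeSort_of_pairwise
  simp_rw [decide_eq_true_eq, ← List.sortedGE_iff_pairwise]
  exact (ordEig_antitone_s14 hA).sortedGE_ofFn

theorem ordEig_eq_eigenvalues_toEuclideanLin :
    ordEig hA = (isSymmetric_toEuclideanLin_iff.mpr hA).eigenvalues finrank_euclideanSpace_fin := by
  rw [← List.ofFn_inj, ← sort_roots_charpoly_eq_ordEig,
    ← LinearMap.IsSymmetric.sort_roots_charpoly_eq_eigenvalues, charpoly_toEuclideanLin]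

end ordEig

/-- For `X` an `M × T` and `H` an `N × M` complex matrix, the eigenvalues of
`X Xᴴ Hᴴ H` are real and nonnegative, and in decreasing order `μ` they satisfy
`μ_i = λ_i(X Xᴴ Hᴴ H) ≤ λ_i(X Xᴴ) · ‖H‖_F²` for each `i ≤ min(M, N, T)` (1-based). -/
theorem stmt_14 (M N T : ℕ) (X : Matrix (Fin M) (Fin T) ℂ) (H : Matrix (Fin N) (Fin M) ℂ) :
    ∃ μ : Fin M → ℝ, Antitone μ ∧
      (X * Xᴴ * (Hᴴ * H)).charpoly.roots = Multiset.map (fun i => (μ i : ℂ)) Finset.univ.val ∧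
      (∀ i, 0 ≤ μ i) ∧
      ∀ i : Fin M, i.val + 1 ≤ min M (min N T) →
        μ i ≤ ordEig (Matrix.isHermitian_mul_conjTranspose_self X) i *
          ∑ k, ∑ l, ‖H k l‖ ^ 2 := by
  have hA : (X * Xᴴ).PosSemidef := posSemidef_self_mul_conjTranspose X
  obtain ⟨S, hS, hSS⟩ := (posSemidef_conjTranspose_mul_self H).exists_isHermitian_mul_self_eq_s14
  have hC : (Sᴴ * (X * Xᴴ) * S).PosSemidef := hA.conjTranspose_mul_mul_same S
  have hcharpoly : (X * Xᴴ * (Hᴴ * H)).charpoly = (Sᴴ * (X * Xᴴ) * S).charpoly := by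
    rw [← hSS, ← mul_assoc, charpoly_mul_comm, ← mul_assoc, hS.eq]
  refine ⟨ordEig hC.1, ordEig_antitone_s14 hC.1, by rw [hcharpoly, roots_charpoly_eq_ordEig],
    fun i => hC.eigenvalues_nonneg _, fun i _ => ?_⟩
  rw [ordEig_eq_eigenvalues_toEuclideanLin, ordEig_eq_eigenvalues_toEuclideanLin]
  refine LinearMap.IsSymmetric.eigenvalues_le_mul_of_re_inner_eq _
    (isPositive_toEuclideanLin_iff.mpr hA) (S := toEuclideanLin S)
    (fun x => by rw [inner_toEuclideanLin_conjTranspose_mul_mul_self]) (fun x => ?_) _ i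
  rw [norm_toEuclideanLin_apply_sq, hS.eq, hSS, ← norm_toEuclideanLin_apply_sq]
  exact norm_toEuclideanLin_apply_sq_le H x
end
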